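/- arXiv:2212.09546 — 6 statements merged into one kernel-verified Lean document; each statement's English description precedes it below -/
import Mathlib

section
/- Let U ⊆ ℝ² be open, and let A, B : ℝ → ℝ be twice differentiable functions such that cos(A(x)+B(y)) ≠ 0 for all (x,y) ∈ U. Then the function w(x,y) = arcsinh(tan(A(x)+B(y))) satisfies the elliptic sinh-Gordon equation Δw = 2 sinh(2w) at a point (x,y) ∈ U if and only if A''(x) + B''(y) = tan(A(x)+B(y))·(4 − (A'(x))² − (B'(y))²). -/
/-- First partial derivative (in the x-direction) of a function on ℝ². -/
noncomputable def pdx (f : ℝ × ℝ → ℝ) (p : ℝ × ℝ) : ℝ := fderiv ℝ f p (1, 0)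

/-- Second partial derivative (in the y-direction) of a function on ℝ². -/
noncomputable def pdy (f : ℝ × ℝ → ℝ) (p : ℝ × ℝ) : ℝ := fderiv ℝ f p (0, 1)

/-- Laplacian of a function on ℝ². -/
noncomputable def lap (f : ℝ × ℝ → ℝ) (p : ℝ × ℝ) : ℝ := pdx (pdx f) p + pdy (pdy f) p

/-!
For `g = arsinh ∘ tan` one has `g' = 1 / |cos| = cosh ∘ g` wherever `cos ≠ 0`, hence
`g'' = sinh g · cosh g`. By the chain rule the Laplacian of `g (A x + B y)` is
`cosh g · (sinh g · (A'² + B'²) + A'' + B'')`, while `2 sinh (2 g) = 4 sinh g · cosh g`;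
cancelling the positive factor `cosh g` and using `sinh g = tan` gives the equivalence.
-/

open Real Filter Topology ContinuousLinearMap

theorem hasDerivAt_arsinh_tan {t : ℝ} (h : cos t ≠ 0) :
    HasDerivAt (fun u => arsinh (tan u)) (cosh (arsinh (tan t))) t := by
  refine ((hasDerivAt_arsinh _).comp t (hasDerivAt_tan h)).congr_deriv ?_
  have hsq : √(1 + tan t ^ 2) ^ 2 = (cos t ^ 2)⁻¹ := by
    rw [sq_sqrt (by positivity), ← inv_one_add_tan_sq h, inv_inv]
  rw [cosh_arsinh]
  field_simp
  rw [hsq, inv_mul_cancel₀ (pow_ne_zero 2 h)]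

theorem hasDerivAt_cosh_arsinh_tan {t : ℝ} (h : cos t ≠ 0) :
    HasDerivAt (fun u => cosh (arsinh (tan u)))
      (sinh (arsinh (tan t)) * cosh (arsinh (tan t))) t :=
  (hasDerivAt_cosh _).comp t (hasDerivAt_arsinh_tan h)

theorem pdy_eq_pdx_comp_swap (f : ℝ × ℝ → ℝ) (p : ℝ × ℝ) :
    pdy f p = pdx (f ∘ Prod.swap) p.swap := by
  have hswap : f ∘ Prod.swap = f ∘ ContinuousLinearEquiv.prodComm ℝ ℝ ℝ := rfl
  rw [pdx, pdy, hswap, ContinuousLinearEquiv.comp_right_fderiv]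
  simp

theorem pdy_pdy_eq_pdx_pdx_comp_swap (f : ℝ × ℝ → ℝ) (p : ℝ × ℝ) :
    pdy (pdy f) p = pdx (pdx (f ∘ Prod.swap)) p.swap := by
  have hswap : pdy f ∘ Prod.swap = pdx (f ∘ Prod.swap) := by
    funext q
    simp [pdy_eq_pdx_comp_swap f q.swap]
  rw [pdy_eq_pdx_comp_swap, hswap]

section SeparatedArgument

variable {φ A B : ℝ → ℝ}

theorem hasFDerivAt_comp_add {φ' a b : ℝ} {p : ℝ × ℝ}
    (hφ : HasDerivAt φ φ' (A p.1 + B p.2)) (hA : HasDerivAt A a p.1) (hB : HasDerivAt B b p.2) :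
    HasFDerivAt (fun q : ℝ × ℝ => φ (A q.1 + B q.2))
      (φ' • (a • fst ℝ ℝ ℝ + b • snd ℝ ℝ ℝ)) p := by
  refine hφ.comp_hasFDerivAt p ((hA.hasFDerivAt.comp p hasFDerivAt_fst).add
    (hB.hasFDerivAt.comp p hasFDerivAt_snd) |>.congr_fderiv ?_)
  ext <;> simp

theorem pdx_pdx_comp_add {φ' : ℝ → ℝ} {φ'' x y : ℝ}
    (hφ : ∀ᶠ t in 𝓝 (A x + B y), HasDerivAt φ (φ' t) t) (hφ' : HasDerivAt φ' φ'' (A x + B y))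
    (hA : Differentiable ℝ A) (hA' : DifferentiableAt ℝ (deriv A) x) (hB : Differentiable ℝ B) :
    pdx (pdx (fun q : ℝ × ℝ => φ (A q.1 + B q.2))) (x, y) =
      φ'' * deriv A x ^ 2 + φ' (A x + B y) * deriv (deriv A) x := by
  have hcont : Continuous fun q : ℝ × ℝ => A q.1 + B q.2 :=
    (hA.continuous.comp continuous_fst).add (hB.continuous.comp continuous_snd)
  have hpdx : pdx (fun q : ℝ × ℝ => φ (A q.1 + B q.2)) =ᶠ[𝓝 (x, y)]
      fun q => φ' (A q.1 + B q.2) * deriv A q.1 := by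
    filter_upwards [hcont.continuousAt.eventually hφ] with q hq
    rw [pdx, (hasFDerivAt_comp_add hq (hA _).hasDerivAt (hB _).hasDerivAt).fderiv]
    simp
  have hA'fst : HasFDerivAt (fun q : ℝ × ℝ => deriv A q.1)
      (deriv (deriv A) x • fst ℝ ℝ ℝ) (x, y) :=
    hA'.hasDerivAt.comp_hasFDerivAt (f := Prod.fst) (x, y) hasFDerivAt_fst
  have hprod : HasFDerivAt (fun q : ℝ × ℝ => φ' (A q.1 + B q.2) * deriv A q.1) _ (x, y) :=
    (hasFDerivAt_comp_add hφ' (hA x).hasDerivAt (hB y).hasDerivAt).mul hA'fst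
  rw [pdx, hpdx.fderiv_eq, hprod.fderiv]
  simp only [smul_add, add_apply, smul_apply, coe_fst', coe_snd', smul_eq_mul, mul_one,
    mul_zero, add_zero]
  ring

theorem lap_comp_add {φ' : ℝ → ℝ} {φ'' x y : ℝ}
    (hφ : ∀ᶠ t in 𝓝 (A x + B y), HasDerivAt φ (φ' t) t) (hφ' : HasDerivAt φ' φ'' (A x + B y))
    (hA : Differentiable ℝ A) (hA' : DifferentiableAt ℝ (deriv A) x)
    (hB : Differentiable ℝ B) (hB' : DifferentiableAt ℝ (deriv B) y) :
    lap (fun q : ℝ × ℝ => φ (A q.1 + B q.2)) (x, y) =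
      φ'' * (deriv A x ^ 2 + deriv B y ^ 2) +
        φ' (A x + B y) * (deriv (deriv A) x + deriv (deriv B) y) := by
  have hswap : (fun q : ℝ × ℝ => φ (A q.1 + B q.2)) ∘ Prod.swap =
      fun q => φ (B q.1 + A q.2) :=
    funext fun _ => congrArg φ (add_comm _ _)
  rw [lap, pdy_pdy_eq_pdx_pdx_comp_swap, hswap, Prod.swap_prod_mk,
    pdx_pdx_comp_add hφ hφ' hA hA' hB,
    pdx_pdx_comp_add (add_comm (A x) (B y) ▸ hφ) (add_comm (A x) (B y) ▸ hφ') hB hB' hA,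
    add_comm (B y)]
  ring

end SeparatedArgument

theorem stmt_2_general (U : Set (ℝ × ℝ))
    (A B : ℝ → ℝ)
    (hA : Differentiable ℝ A) (hA' : Differentiable ℝ (deriv A))
    (hB : Differentiable ℝ B) (hB' : Differentiable ℝ (deriv B))
    (hcos : ∀ p ∈ U, Real.cos (A p.1 + B p.2) ≠ 0)
    (w : ℝ × ℝ → ℝ) (hw : ∀ p : ℝ × ℝ, w p = Real.arsinh (Real.tan (A p.1 + B p.2)))
    (x y : ℝ) (hxy : (x, y) ∈ U) :
    lap w (x, y) = 2 * Real.sinh (2 * w (x, y)) ↔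
      deriv (deriv A) x + deriv (deriv B) y =
        Real.tan (A x + B y) * (4 - (deriv A x) ^ 2 - (deriv B y) ^ 2) := by
  have hc : cos (A x + B y) ≠ 0 := hcos (x, y) hxy
  have hφ : ∀ᶠ t in 𝓝 (A x + B y),
      HasDerivAt (fun u => arsinh (tan u)) (cosh (arsinh (tan t))) t :=
    (continuous_cos.continuousAt.eventually_ne hc).mono fun _ ht => hasDerivAt_arsinh_tan ht
  rw [funext hw, lap_comp_add hφ (hasDerivAt_cosh_arsinh_tan hc) hA (hA' x) hB (hB' y),
    sinh_two_mul, sinh_arsinh]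
  have hcosh : cosh (arsinh (tan (A x + B y))) ≠ 0 := (cosh_pos _).ne'
  constructor <;> intro h
  · exact mul_left_cancel₀ hcosh (by linear_combination h)
  · linear_combination cosh (arsinh (tan (A x + B y))) * h

theorem stmt_2 (U : Set (ℝ × ℝ)) (hU : IsOpen U)
    (A B : ℝ → ℝ)
    (hA : Differentiable ℝ A) (hA' : Differentiable ℝ (deriv A))
    (hB : Differentiable ℝ B) (hB' : Differentiable ℝ (deriv B))
    (hcos : ∀ p ∈ U, Real.cos (A p.1 + B p.2) ≠ 0)
    (w : ℝ × ℝ → ℝ) (hw : ∀ p : ℝ × ℝ, w p = Real.arsinh (Real.tan (A p.1 + B p.2)))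
    (x y : ℝ) (hxy : (x, y) ∈ U) :
    lap w (x, y) = 2 * Real.sinh (2 * w (x, y)) ↔
      deriv (deriv A) x + deriv (deriv B) y =
        Real.tan (A x + B y) * (4 - (deriv A x) ^ 2 - (deriv B y) ^ 2) :=
  stmt_2_general U A B hA hA' hB hB' hcos w hw x y hxy
end

section
/- Let I be a real interval containing 0, let g : I → ℝ be continuous, and let f : I → ℝ be differentiable with f'(y) = −2 g(y) cosh(f(y)) for all y ∈ I and f(0) = 0. Then for every y ∈ I one has |∫₀^y g(s) ds| < π/4 and tanh(f(y)/2) = −tan(∫₀^y g(s) ds). -/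
/-!
The function `y ↦ -arctan (tanh (f y / 2))` is a primitive of `g` on `I`: the chain rule turns
`f' = -2 g cosh f` into exactly `g`, because `arctan ∘ tanh ∘ (· / 2)` has derivative
`1 / (2 cosh)`. As it vanishes at `0`, it equals `∫₀^y g`, and since `|tanh| < 1` its absolute
value stays below `arctan 1 = π / 4`.
-/

open Real Set Filter Topology intervalIntegral

theorem intervalIntegral.integral_eq_sub_of_hasDerivWithinAt_of_ordConnected
    {E : Type*} [NormedAddCommGroup E] [NormedSpace ℝ E] [CompleteSpace E]
    {I : Set ℝ} (hI : I.OrdConnected) {F f : ℝ → E} {a b : ℝ} (ha : a ∈ I) (hb : b ∈ I)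
    (hF : ∀ x ∈ I, HasDerivWithinAt F (f x) I x) (hf : ContinuousOn f I) :
    ∫ x in a..b, f x = F b - F a := by
  have hab : uIcc a b ⊆ I := hI.uIcc_subset ha hb
  refine integral_eq_sub_of_hasDeriv_right
    (fun x hx => (hF x (hab hx)).continuousWithinAt.mono hab) (fun x hx => ?_)
    (hf.mono hab).intervalIntegrable
  have hI_nhds : I ∈ 𝓝 x :=
    mem_of_superset (Ioo_mem_nhds hx.1 hx.2) (Ioo_subset_Icc_self.trans hab)
  exact ((hF x (hab (Ioo_subset_Icc_self hx))).hasDerivAt hI_nhds).hasDerivWithinAt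

namespace Real

theorem hasDerivAt_tanh (x : ℝ) : HasDerivAt tanh (cosh x ^ 2)⁻¹ x := by
  have hcosh : cosh x ≠ 0 := (cosh_pos x).ne'
  rw [show tanh = fun y => sinh y / cosh y from funext tanh_eq_sinh_div_cosh]
  refine ((hasDerivAt_sinh x).div (hasDerivAt_cosh x) hcosh).congr_deriv ?_
  field_simp
  linear_combination cosh_sq_sub_sinh_sq x

theorem hasDerivAt_arctan_tanh_half (x : ℝ) :
    HasDerivAt (fun x => arctan (tanh (x / 2))) (2 * cosh x)⁻¹ x := by
  refine ((hasDerivAt_tanh (x / 2)).arctan.comp x ((hasDerivAt_id x).div_const 2)).congr_deriv ?_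
  rw [tanh_eq_sinh_div_cosh, show x = 2 * (x / 2) by ring, cosh_two_mul]
  field_simp

theorem abs_arctan_tanh_lt (x : ℝ) : |arctan (tanh x)| < π / 4 := by
  rw [← arctan_one, abs_lt, ← arctan_neg]
  exact ⟨arctan_strictMono (neg_one_lt_tanh x), arctan_strictMono (tanh_lt_one x)⟩

end Real

theorem stmt_8 (I : Set ℝ) (hI : I.OrdConnected) (hI0 : (0 : ℝ) ∈ I)
    (g : ℝ → ℝ) (hg : ContinuousOn g I)
    (f : ℝ → ℝ)
    (hf : ∀ y ∈ I, HasDerivWithinAt f (-2 * g y * Real.cosh (f y)) I y)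
    (hf0 : f 0 = 0) :
    ∀ y ∈ I, |∫ s in (0 : ℝ)..y, g s| < Real.pi / 4 ∧
      Real.tanh (f y / 2) = -Real.tan (∫ s in (0 : ℝ)..y, g s) := by
  intro y hy
  have hprimitive : ∀ x ∈ I,
      HasDerivWithinAt (fun x => -arctan (tanh (f x / 2))) (g x) I x := fun x hx => by
    refine ((hasDerivAt_arctan_tanh_half (f x)).comp_hasDerivWithinAt x (hf x hx)).neg
      |>.congr_deriv ?_
    field_simp
  have hintegral : ∫ s in (0 : ℝ)..y, g s = -arctan (tanh (f y / 2)) := by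
    simpa [hf0] using
      integral_eq_sub_of_hasDerivWithinAt_of_ordConnected hI hI0 hy hprimitive hg
  rw [hintegral, abs_neg, tan_neg, tan_arctan, neg_neg]
  exact ⟨abs_arctan_tanh_lt _, rfl⟩
end

section
/- Let I be a real interval containing 0, let g : I → ℝ be continuous, and let f : I → ℝ be differentiable with f'(x) = −2 g(x) sinh(f(x)) for all x ∈ I. Then for every x ∈ I one has tanh(f(x)/2) = tanh(f(0)/2) · exp(−2 ∫₀^x g(t) dt). -/
/-!
The substitution `u = tanh (f / 2)` linearizes the equation: since `tanh' = 1 / cosh²` and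
`sinh f = 2 sinh (f / 2) cosh (f / 2)`, the equation `f' = c sinh f` becomes `u' = c u`.
With `c = -2 g`, the product `u · exp (2 ∫₀ˣ g)` then has zero derivative, hence is constant
on the interval `I`.
-/

open Real Set intervalIntegral

theorem Real.hasDerivAt_tanh_s9 (x : ℝ) : HasDerivAt tanh (1 / cosh x ^ 2) x := by
  have h := (hasDerivAt_sinh x).div (hasDerivAt_cosh x) (cosh_pos x).ne'
  rw [show (sinh / cosh) = tanh from funext fun y => (tanh_eq_sinh_div_cosh y).symm] at h
  refine h.congr_deriv ?_
  rw [← cosh_sq_sub_sinh_sq x]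
  ring

theorem HasDerivWithinAt.tanh {f : ℝ → ℝ} {f' x : ℝ} {s : Set ℝ}
    (hf : HasDerivWithinAt f f' s x) :
    HasDerivWithinAt (fun y => Real.tanh (f y)) (f' / Real.cosh (f x) ^ 2) s x := by
  refine ((Real.hasDerivAt_tanh_s9 (f x)).comp_hasDerivWithinAt x hf).congr_deriv ?_
  ring

theorem HasDerivWithinAt.tanh_half {f : ℝ → ℝ} {c x : ℝ} {s : Set ℝ}
    (hf : HasDerivWithinAt f (c * Real.sinh (f x)) s x) :
    HasDerivWithinAt (fun y => Real.tanh (f y / 2)) (c * Real.tanh (f x / 2)) s x := by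
  refine (hf.div_const 2).tanh.congr_deriv ?_
  have hsinh : Real.sinh (f x) = 2 * Real.sinh (f x / 2) * Real.cosh (f x / 2) := by
    rw [← sinh_two_mul, mul_div_cancel₀ _ two_ne_zero]
  rw [hsinh, tanh_eq_sinh_div_cosh]
  field_simp

theorem Convex.is_const_of_hasDerivWithinAt_zero {E : Type*} [NormedAddCommGroup E]
    [NormedSpace ℝ E] {s : Set ℝ} (hs : Convex ℝ s) {f : ℝ → E}
    (hf : ∀ x ∈ s, HasDerivWithinAt f 0 s x)
    {x y : ℝ} (hx : x ∈ s) (hy : y ∈ s) : f x = f y := by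
  simpa [sub_eq_zero, eq_comm] using
    hs.norm_image_sub_le_of_norm_hasDerivWithin_le hf (fun _ _ => norm_zero.le) hx hy

theorem ContinuousOn.exists_continuous_eqOn_uIcc {β : Type*} [TopologicalSpace β] {a : ℝ → β}
    {x₀ x : ℝ} (ha : ContinuousOn a (uIcc x₀ x)) :
    ∃ b : ℝ → β, Continuous b ∧ EqOn b a (uIcc x₀ x) :=
  ⟨IccExtend min_le_max ((uIcc x₀ x).domRestrict a),
    continuous_IccExtend_iff.mpr ha.domRestrict,
    fun _ ht => IccExtend_of_mem _ _ ht⟩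

theorem Set.OrdConnected.eq_mul_exp_integral_of_hasDerivWithinAt {s : Set ℝ}
    (hs : s.OrdConnected) {a u : ℝ → ℝ} (ha : ContinuousOn a s)
    (hu : ∀ x ∈ s, HasDerivWithinAt u (a x * u x) s x)
    {x₀ x : ℝ} (hx₀ : x₀ ∈ s) (hx : x ∈ s) :
    u x = u x₀ * exp (∫ t in x₀..x, a t) := by
  have hK : uIcc x₀ x ⊆ s := hs.uIcc_subset hx₀ hx
  -- `a` is only continuous on `s`; a continuous extension makes `∫ a` differentiable everywhere.
  obtain ⟨b, hb, hba⟩ := (ha.mono hK).exists_continuous_eqOn_uIcc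
  set B : ℝ → ℝ := fun y => ∫ t in x₀..y, b t
  have hderiv : ∀ y ∈ uIcc x₀ x,
      HasDerivWithinAt (fun y => u y * exp (-B y)) 0 (uIcc x₀ x) y := by
    intro y hy
    have hB : HasDerivAt B (b y) y := (hb.integral_hasStrictDerivAt x₀ y).hasDerivAt
    refine (((hu y (hK hy)).mono hK).mul hB.neg.exp.hasDerivWithinAt).congr_deriv ?_
    rw [hba hy]
    ring
  have hBx : B x = ∫ t in x₀..x, a t := integral_congr hba
  have h :=
    (convex_uIcc x₀ x).is_const_of_hasDerivWithinAt_zero hderiv right_mem_uIcc left_mem_uIcc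
  simp only [B, integral_same, neg_zero, exp_zero, mul_one] at h
  rw [← h, ← hBx, mul_assoc, ← exp_add, neg_add_cancel, exp_zero, mul_one]

theorem stmt_9 (I : Set ℝ) (hI : I.OrdConnected) (hI0 : (0 : ℝ) ∈ I)
    (g : ℝ → ℝ) (hg : ContinuousOn g I)
    (f : ℝ → ℝ)
    (hf : ∀ x ∈ I, HasDerivWithinAt f (-2 * g x * Real.sinh (f x)) I x) :
    ∀ x ∈ I, Real.tanh (f x / 2) =
      Real.tanh (f 0 / 2) * Real.exp (-2 * ∫ t in (0 : ℝ)..x, g t) := by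
  intro x hx
  have hu : ∀ y ∈ I, HasDerivWithinAt (fun y => Real.tanh (f y / 2))
      (-2 * g y * Real.tanh (f y / 2)) I y := fun y hy => HasDerivWithinAt.tanh_half (hf y hy)
  rw [← integral_const_mul]
  exact hI.eq_mul_exp_integral_of_hasDerivWithinAt (continuousOn_const.mul hg) hu hI0 hx
end

section
/- Let U = {(x,y) ∈ ℝ² : sinh(2x)·sinh(2y) < 1}, let w : U → ℝ be defined by w(x,y) = arcsinh( (sinh(2x) + sinh(2y)) / (1 − sinh(2x)·sinh(2y)) ), and let u : ℝ² → ℂ be u = R + iS with R(x,y) = sech(2y) − sinh(2x)·tanh(2y) and S(x,y) = sinh(2x)·sech(2y) + tanh(2y) − 2y. Then on U one has ∂u/∂z̄ = e^{−2w} · ∂u/∂z, where ∂/∂z = (1/2)(∂/∂x − i ∂/∂y) and ∂/∂z̄ = (1/2)(∂/∂x + i ∂/∂y). -/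
/-- First partial derivative (in the x-direction) of a ℂ-valued function on ℝ². -/
noncomputable def cpdx (f : ℝ × ℝ → ℂ) (p : ℝ × ℝ) : ℂ := fderiv ℝ f p (1, 0)

/-- Second partial derivative (in the y-direction) of a ℂ-valued function on ℝ². -/
noncomputable def cpdy (f : ℝ × ℝ → ℂ) (p : ℝ × ℝ) : ℂ := fderiv ℝ f p (0, 1)

/-- Wirtinger derivative ∂/∂z = (1/2)(∂/∂x − i ∂/∂y). -/
noncomputable def dz (f : ℝ × ℝ → ℂ) (p : ℝ × ℝ) : ℂ :=
  (1 / 2 : ℂ) * (cpdx f p - Complex.I * cpdy f p)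

/-- Wirtinger derivative ∂/∂z̄ = (1/2)(∂/∂x + i ∂/∂y). -/
noncomputable def dzbar (f : ℝ × ℝ → ℂ) (p : ℝ × ℝ) : ℂ :=
  (1 / 2 : ℂ) * (cpdx f p + Complex.I * cpdy f p)

/-!
Put `a = sinh 2x`, `b = sinh 2y`. Since `(1 + i a)(1 + i b) = (1 - a b) + i (a + b)`,
the map is `u = (1 + i a)(1 + i b) / cosh 2y - 2 i y`, and its partial derivatives are
`u_x = α c` and `u_y = i β c` with `α = cosh 2x`, `β = (a + b) / cosh 2y` and
`c = 2 i (1 + i b) / cosh 2y`. Hence `∂u/∂z̄ : ∂u/∂z = (α - β) : (α + β)`.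
On the other side, for `z = (a + b) / (1 - a b)` we have
`e^{-2 arsinh z} = (√(1 + z²) - z) / (√(1 + z²) + z)`, and
`√(1 + z²) = cosh 2x cosh 2y / (1 - a b)` when `a b < 1`, which gives the same ratio.
-/

open Complex

theorem cpdx_eq_of_hasDerivAt {f : ℝ × ℝ → ℂ} {p : ℝ × ℝ} {d : ℂ} (hf : DifferentiableAt ℝ f p)
    (h : HasDerivAt (fun t => f (t, p.2)) d p.1) : cpdx f p = d := by
  have hline := hf.hasFDerivAt.comp_hasDerivAt p.1
    ((hasDerivAt_id p.1).prodMk (hasDerivAt_const p.1 p.2))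
  exact (h.unique hline).symm

theorem cpdy_eq_of_hasDerivAt {f : ℝ × ℝ → ℂ} {p : ℝ × ℝ} {d : ℂ} (hf : DifferentiableAt ℝ f p)
    (h : HasDerivAt (fun t => f (p.1, t)) d p.2) : cpdy f p = d := by
  have hline := hf.hasFDerivAt.comp_hasDerivAt p.2
    ((hasDerivAt_const p.2 p.1).prodMk (hasDerivAt_id p.2))
  exact (h.unique hline).symm

theorem dzbar_eq_mul_dz_of_cpdx_of_cpdy {f : ℝ × ℝ → ℂ} {p : ℝ × ℝ} {c : ℂ} {α β e : ℝ}
    (hx : cpdx f p = α * c) (hy : cpdy f p = I * β * c) (he : e * (α + β) = α - β) :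
    dzbar f p = e * dz f p := by
  have he' : (e : ℂ) * (α + β) = α - β := by exact_mod_cast he
  rw [dzbar, dz, hx, hy]
  linear_combination -(c / 2) * he' + (c * β * (1 + e) / 2) * I_mul_I

theorem Real.exp_neg_two_mul_arsinh_mul (z : ℝ) :
    Real.exp (-2 * Real.arsinh z) * (√(1 + z ^ 2) + z) = √(1 + z ^ 2) - z := by
  have hpos : 0 < z + √(1 + z ^ 2) := Real.exp_arsinh z ▸ Real.exp_pos _
  have hsq : √(1 + z ^ 2) ^ 2 = 1 + z ^ 2 := Real.sq_sqrt (by positivity)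
  rw [show -2 * Real.arsinh z = -Real.arsinh z + -Real.arsinh z by ring, Real.exp_add,
    Real.exp_neg, Real.exp_arsinh]
  field_simp
  linear_combination -(√(1 + z ^ 2) + z) * hsq

theorem Real.sqrt_one_add_sq_sinh_add_div {s t : ℝ} (h : Real.sinh s * Real.sinh t < 1) :
    √(1 + ((Real.sinh s + Real.sinh t) / (1 - Real.sinh s * Real.sinh t)) ^ 2) =
      Real.cosh s * Real.cosh t / (1 - Real.sinh s * Real.sinh t) := by
  have hden : 0 < 1 - Real.sinh s * Real.sinh t := by linarith
  rw [Real.sqrt_eq_iff_mul_self_eq_of_pos (by positivity)]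
  field_simp
  linear_combination (1 + Real.sinh s ^ 2) * Real.cosh_sq t + Real.cosh t ^ 2 * Real.cosh_sq s

theorem Real.exp_neg_two_mul_arsinh_sinh_add_div {s t : ℝ} (h : Real.sinh s * Real.sinh t < 1) :
    Real.exp (-2 * Real.arsinh ((Real.sinh s + Real.sinh t) / (1 - Real.sinh s * Real.sinh t))) *
        (Real.cosh s + (Real.sinh s + Real.sinh t) / Real.cosh t) =
      Real.cosh s - (Real.sinh s + Real.sinh t) / Real.cosh t := by
  have key := Real.exp_neg_two_mul_arsinh_mul
    ((Real.sinh s + Real.sinh t) / (1 - Real.sinh s * Real.sinh t))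
  rw [Real.sqrt_one_add_sq_sinh_add_div h] at key
  have hden : 1 - Real.sinh s * Real.sinh t ≠ 0 := by linarith
  have hcosh : Real.cosh t ≠ 0 := (Real.cosh_pos t).ne'
  field_simp at key ⊢
  linear_combination key

noncomputable def sinhGordonMap (q : ℝ × ℝ) : ℂ :=
  (1 + I * Real.sinh (2 * q.1)) * (1 + I * Real.sinh (2 * q.2)) / Real.cosh (2 * q.2) - 2 * I * q.2

theorem differentiableAt_sinhGordonMap (p : ℝ × ℝ) : DifferentiableAt ℝ sinhGordonMap p := by
  have h : sinhGordonMap = fun q : ℝ × ℝ => (1 + I * Real.sinh (2 * q.1)) *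
      (1 + I * Real.sinh (2 * q.2)) * ((Real.cosh (2 * q.2))⁻¹ : ℝ) - 2 * I * q.2 := by
    funext q
    rw [sinhGordonMap, ofReal_inv, div_eq_mul_inv]
  rw [h]
  fun_prop (disch := exact (Real.cosh_pos _).ne')

theorem hasDerivAt_ofReal_sinh_two_mul (t : ℝ) :
    HasDerivAt (fun s : ℝ => (Real.sinh (2 * s) : ℂ)) (2 * Real.cosh (2 * t)) t := by
  have := (((hasDerivAt_id t).const_mul 2).sinh).ofReal_comp
  simpa [mul_comm] using this

theorem hasDerivAt_ofReal_cosh_two_mul (t : ℝ) :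
    HasDerivAt (fun s : ℝ => (Real.cosh (2 * s) : ℂ)) (2 * Real.sinh (2 * t)) t := by
  have := (((hasDerivAt_id t).const_mul 2).cosh).ofReal_comp
  simpa [mul_comm] using this

theorem cpdx_sinhGordonMap (x y : ℝ) :
    cpdx sinhGordonMap (x, y) =
      Real.cosh (2 * x) * (2 * I * (1 + I * Real.sinh (2 * y)) / Real.cosh (2 * y)) := by
  refine cpdx_eq_of_hasDerivAt (differentiableAt_sinhGordonMap _) ?_
  have h := ((((hasDerivAt_ofReal_sinh_two_mul x).const_mul I).const_add 1).mul_const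
    ((1 + I * Real.sinh (2 * y)) / Real.cosh (2 * y))).sub_const (2 * I * y)
  have hline : (fun t => sinhGordonMap (t, y)) = fun t => (1 + I * Real.sinh (2 * t)) *
      ((1 + I * Real.sinh (2 * y)) / Real.cosh (2 * y)) - 2 * I * y := by
    simp only [sinhGordonMap, mul_div_assoc]
  rw [hline]
  exact h.congr_deriv (by ring)

theorem cpdy_sinhGordonMap (x y : ℝ) :
    cpdy sinhGordonMap (x, y) =
      I * (((Real.sinh (2 * x) + Real.sinh (2 * y)) / Real.cosh (2 * y) : ℝ) : ℂ) *
        (2 * I * (1 + I * Real.sinh (2 * y)) / Real.cosh (2 * y)) := by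
  refine cpdy_eq_of_hasDerivAt (differentiableAt_sinhGordonMap _) ?_
  have hcosh : (Real.cosh (2 * y) : ℂ) ≠ 0 := by exact_mod_cast (Real.cosh_pos _).ne'
  have h := ((((hasDerivAt_ofReal_sinh_two_mul y).const_mul I).const_add 1).const_mul
    (1 + I * Real.sinh (2 * x))).div (hasDerivAt_ofReal_cosh_two_mul y) hcosh
    |>.sub (((hasDerivAt_id y).ofReal_comp).const_mul (2 * I))
  refine h.congr_deriv ?_
  have hsq : (Real.cosh (2 * y) : ℂ) ^ 2 = Real.sinh (2 * y) ^ 2 + 1 := by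
    exact_mod_cast Real.cosh_sq (2 * y)
  rw [ofReal_div, ofReal_add, ofReal_one]
  field_simp
  linear_combination I ^ 2 * Real.sinh (2 * x) * hsq -
    Real.sinh (2 * y) * (1 + I * Real.sinh (2 * x) + I * Real.sinh (2 * y)) * I_sq

theorem stmt_13 (U : Set (ℝ × ℝ))
    (hU : U = {p : ℝ × ℝ | Real.sinh (2 * p.1) * Real.sinh (2 * p.2) < 1})
    (w : ℝ × ℝ → ℝ)
    (hw : ∀ p : ℝ × ℝ, w p = Real.arsinh ((Real.sinh (2 * p.1) + Real.sinh (2 * p.2)) /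
      (1 - Real.sinh (2 * p.1) * Real.sinh (2 * p.2))))
    (R S : ℝ × ℝ → ℝ)
    (hR : ∀ p : ℝ × ℝ, R p = 1 / Real.cosh (2 * p.2) -
      Real.sinh (2 * p.1) * Real.tanh (2 * p.2))
    (hS : ∀ p : ℝ × ℝ, S p = Real.sinh (2 * p.1) / Real.cosh (2 * p.2) +
      Real.tanh (2 * p.2) - 2 * p.2)
    (u : ℝ × ℝ → ℂ)
    (hu : ∀ p : ℝ × ℝ, u p = (R p : ℂ) + Complex.I * (S p : ℂ)) :
    ∀ p ∈ U, dzbar u p = (Real.exp (-2 * w p) : ℂ) * dz u p := by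
  have hu_eq : u = sinhGordonMap := by
    funext q
    have hcosh : (Real.cosh (2 * q.2) : ℂ) ≠ 0 := by exact_mod_cast (Real.cosh_pos _).ne'
    rw [hu, hR, hS, sinhGordonMap, Real.tanh_eq_sinh_div_cosh]
    simp only [ofReal_sub, ofReal_add, ofReal_mul, ofReal_div, ofReal_one, ofReal_ofNat]
    field_simp
    linear_combination -(Real.sinh (2 * q.1) * Real.sinh (2 * q.2)) * I_sq
  rintro ⟨x, y⟩ hp
  rw [hU] at hp
  rw [hu_eq, hw]
  exact dzbar_eq_mul_dz_of_cpdx_of_cpdy (cpdx_sinhGordonMap x y) (cpdy_sinhGordonMap x y)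
    (Real.exp_neg_two_mul_arsinh_sinh_add_div hp)
end

section
/- The function θ(x,y) = 2 arctan(2y·sec(2x)), defined on the open set {(x,y) ∈ ℝ² : cos(2x) ≠ 0}, satisfies the elliptic sine-Gordon equation Δθ = −2 sin(2θ) there. -/
open Real Filter Topology

-- `pdx` is defined through `fderiv`, so reading it off a line derivative needs differentiability.
lemma pdx_eq_of_hasDerivAt {f : ℝ × ℝ → ℝ} {p : ℝ × ℝ} {a : ℝ} (hf : DifferentiableAt ℝ f p)
    (h : HasDerivAt (fun x => f (x, p.2)) a p.1) : pdx f p = a := by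
  have hline : HasDerivAt (fun x : ℝ => (x, p.2)) ((1 : ℝ), (0 : ℝ)) p.1 :=
    (hasDerivAt_id _).prodMk (hasDerivAt_const _ _)
  exact (hf.hasFDerivAt.comp_hasDerivAt p.1 hline).unique h

lemma pdy_eq_of_hasDerivAt {f : ℝ × ℝ → ℝ} {p : ℝ × ℝ} {a : ℝ} (hf : DifferentiableAt ℝ f p)
    (h : HasDerivAt (fun y => f (p.1, y)) a p.2) : pdy f p = a := by
  have hline : HasDerivAt (fun y : ℝ => (p.1, y)) ((0 : ℝ), (1 : ℝ)) p.2 :=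
    (hasDerivAt_const _ _).prodMk (hasDerivAt_id _)
  exact (hf.hasFDerivAt.comp_hasDerivAt p.2 hline).unique h

lemma Filter.EventuallyEq.pdx_eq {f g : ℝ × ℝ → ℝ} {p : ℝ × ℝ} (h : f =ᶠ[𝓝 p] g) :
    pdx f p = pdx g p := by
  rw [pdx, pdx, h.fderiv_eq]

lemma Filter.EventuallyEq.pdy_eq {f g : ℝ × ℝ → ℝ} {p : ℝ × ℝ} (h : f =ᶠ[𝓝 p] g) :
    pdy f p = pdy g p := by
  rw [pdy, pdy, h.fderiv_eq]

lemma sin_two_mul_two_mul_arctan (u : ℝ) :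
    sin (2 * (2 * arctan u)) = 4 * u * (1 - u ^ 2) / (1 + u ^ 2) ^ 2 := by
  have hsc : sin (arctan u) * cos (arctan u) = u / (1 + u ^ 2) := by
    rw [sin_arctan, cos_arctan, div_mul_div_comm, mul_one, ← sq, sq_sqrt (by positivity)]
  rw [sin_two_mul, sin_two_mul, cos_two_mul', sin_sq_arctan, cos_sq_arctan,
    mul_assoc 2 (sin _), hsc]
  field_simp
  ring

noncomputable def theta (p : ℝ × ℝ) : ℝ := 2 * arctan (2 * p.2 / cos (2 * p.1))

noncomputable def thetaDx (p : ℝ × ℝ) : ℝ :=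
  8 * p.2 * sin (2 * p.1) / (cos (2 * p.1) ^ 2 + 4 * p.2 ^ 2)

noncomputable def thetaDy (p : ℝ × ℝ) : ℝ :=
  4 * cos (2 * p.1) / (cos (2 * p.1) ^ 2 + 4 * p.2 ^ 2)

section

variable {p : ℝ × ℝ} (hp : cos (2 * p.1) ≠ 0)
include hp

lemma differentiableAt_theta : DifferentiableAt ℝ theta p := by
  unfold theta
  exact (by fun_prop (disch := assumption) : DifferentiableAt ℝ _ p).arctan.const_mul 2

lemma hasDerivAt_theta_fst : HasDerivAt (fun x => theta (x, p.2)) (thetaDx p) p.1 := by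
  have hc : HasDerivAt (fun x => cos (2 * x)) (-sin (2 * p.1) * 2) p.1 :=
    ((hasDerivAt_id p.1).const_mul 2).cos.congr_deriv (by simp)
  refine (((hasDerivAt_const p.1 (2 * p.2)).div hc hp).arctan.const_mul 2).congr_deriv ?_
  simp only [thetaDx, Pi.div_apply]
  field_simp
  ring

lemma hasDerivAt_theta_snd : HasDerivAt (fun y => theta (p.1, y)) (thetaDy p) p.2 := by
  refine ((((hasDerivAt_id p.2).const_mul 2).div_const (cos (2 * p.1))).arctan.const_mul
    2).congr_deriv ?_
  simp only [thetaDy, id]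
  field_simp
  ring

end

lemma pdx_thetaDx {p : ℝ × ℝ} (hD : cos (2 * p.1) ^ 2 + 4 * p.2 ^ 2 ≠ 0) :
    pdx thetaDx p = 16 * p.2 * cos (2 * p.1) * (4 * p.2 ^ 2 - cos (2 * p.1) ^ 2 + 2)
      / (cos (2 * p.1) ^ 2 + 4 * p.2 ^ 2) ^ 2 := by
  have h2x : HasDerivAt (fun x : ℝ => 2 * x) 2 p.1 :=
    ((hasDerivAt_id p.1).const_mul 2).congr_deriv (mul_one 2)
  refine pdx_eq_of_hasDerivAt (by unfold thetaDx; fun_prop (disch := assumption)) ?_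
  refine ((h2x.sin.const_mul (8 * p.2)).div
    ((h2x.cos.pow 2).add_const (4 * p.2 ^ 2)) hD).congr_deriv ?_
  simp only [Pi.pow_apply]
  field_simp
  rw [sin_sq]
  ring

lemma pdy_thetaDy {p : ℝ × ℝ} (hD : cos (2 * p.1) ^ 2 + 4 * p.2 ^ 2 ≠ 0) :
    pdy thetaDy p = -32 * p.2 * cos (2 * p.1) / (cos (2 * p.1) ^ 2 + 4 * p.2 ^ 2) ^ 2 := by
  refine pdy_eq_of_hasDerivAt (by unfold thetaDy; fun_prop (disch := assumption)) ?_
  refine ((hasDerivAt_const p.2 (4 * cos (2 * p.1))).div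
    (((hasDerivAt_pow 2 p.2).const_mul 4).const_add (cos (2 * p.1) ^ 2)) hD).congr_deriv ?_
  field_simp
  ring

lemma lap_theta {p : ℝ × ℝ} (hp : cos (2 * p.1) ≠ 0) :
    lap theta p = -2 * sin (2 * theta p) := by
  have hD : cos (2 * p.1) ^ 2 + 4 * p.2 ^ 2 ≠ 0 := by positivity
  have hnhds : ∀ᶠ q in 𝓝 p, cos (2 * q.1) ≠ 0 :=
    (isOpen_ne_fun (by fun_prop) continuous_const).mem_nhds hp
  have hx : pdx theta =ᶠ[𝓝 p] thetaDx := hnhds.mono fun q hq =>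
    pdx_eq_of_hasDerivAt (differentiableAt_theta hq) (hasDerivAt_theta_fst hq)
  have hy : pdy theta =ᶠ[𝓝 p] thetaDy := hnhds.mono fun q hq =>
    pdy_eq_of_hasDerivAt (differentiableAt_theta hq) (hasDerivAt_theta_snd hq)
  rw [lap, hx.pdx_eq, hy.pdy_eq, pdx_thetaDx hD, pdy_thetaDy hD, theta,
    sin_two_mul_two_mul_arctan]
  field_simp
  ring

theorem stmt_15 (θ : ℝ × ℝ → ℝ)
    (hθ : ∀ p : ℝ × ℝ, θ p = 2 * Real.arctan (2 * p.2 / Real.cos (2 * p.1))) :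
    ∀ p : ℝ × ℝ, Real.cos (2 * p.1) ≠ 0 → lap θ p = -2 * Real.sin (2 * θ p) := by
  obtain rfl : θ = theta := funext hθ
  exact fun p => lap_theta
end

section
/- The function θ : ℝ² → ℝ defined by θ(x,y) = 2 arctan( (cosh(√2·x) − cosh(√2·y)) / (cosh(√2·x) + cosh(√2·y)) ) satisfies the elliptic sine-Gordon equation Δθ = −2 sin(2θ) on all of ℝ². -/
/-!
With `a = cosh (√2 x)` and `b = cosh (√2 y)`, the double-angle formula for `arctan` gives
`θ = gd w`, where `gd w = arctan (sinh w)` is the Gudermannian function and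
`w = log a - log b` is a sum of a function of `x` and a function of `y`. The chain rule turns
`Δ (gd w)` into `gd'' w * |∇w|² + gd' w * Δw`, with `gd' = sech` and `gd'' = -sinh / cosh²`,
while `sin (2 gd w) = 2 sinh w / cosh² w`; since `sinh w` and `cosh w` are rational in `a` and
`b`, what is left is a rational identity in `a`, `b`, using `sinh² = cosh² - 1`.
-/

open Real ContinuousLinearMap

lemma pdx_eq_of_hasFDerivAt {f : ℝ × ℝ → ℝ} {L : ℝ × ℝ →L[ℝ] ℝ} {p : ℝ × ℝ}
    (h : HasFDerivAt f L p) : pdx f p = L (1, 0) := by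
  rw [pdx, h.fderiv]

lemma pdy_eq_of_hasFDerivAt {f : ℝ × ℝ → ℝ} {L : ℝ × ℝ →L[ℝ] ℝ} {p : ℝ × ℝ}
    (h : HasFDerivAt f L p) : pdy f p = L (0, 1) := by
  rw [pdy, h.fderiv]

section CompFstAddSnd

variable {g g' g'' C C' C'' D D' D'' : ℝ → ℝ}

lemma hasFDerivAt_comp_fst_add_snd (hg : ∀ t, HasDerivAt g (g' t) t)
    (hC : ∀ x, HasDerivAt C (C' x) x) (hD : ∀ y, HasDerivAt D (D' y) y) (p : ℝ × ℝ) :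
    HasFDerivAt (fun q : ℝ × ℝ => g (C q.1 + D q.2))
      (g' (C p.1 + D p.2) • (C' p.1 • fst ℝ ℝ ℝ + D' p.2 • snd ℝ ℝ ℝ)) p :=
  (hg _).comp_hasFDerivAt p
    (((hC p.1).comp_hasFDerivAt p hasFDerivAt_fst).add ((hD p.2).comp_hasFDerivAt p hasFDerivAt_snd))

lemma pdx_comp_fst_add_snd (hg : ∀ t, HasDerivAt g (g' t) t)
    (hC : ∀ x, HasDerivAt C (C' x) x) (hD : ∀ y, HasDerivAt D (D' y) y) :
    pdx (fun q : ℝ × ℝ => g (C q.1 + D q.2)) = fun q => g' (C q.1 + D q.2) * C' q.1 := by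
  funext q
  simp [pdx_eq_of_hasFDerivAt (hasFDerivAt_comp_fst_add_snd hg hC hD q)]

lemma pdy_comp_fst_add_snd (hg : ∀ t, HasDerivAt g (g' t) t)
    (hC : ∀ x, HasDerivAt C (C' x) x) (hD : ∀ y, HasDerivAt D (D' y) y) :
    pdy (fun q : ℝ × ℝ => g (C q.1 + D q.2)) = fun q => g' (C q.1 + D q.2) * D' q.2 := by
  funext q
  simp [pdy_eq_of_hasFDerivAt (hasFDerivAt_comp_fst_add_snd hg hC hD q)]

lemma lap_comp_fst_add_snd (hg : ∀ t, HasDerivAt g (g' t) t)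
    (hg' : ∀ t, HasDerivAt g' (g'' t) t)
    (hC : ∀ x, HasDerivAt C (C' x) x) (hC' : ∀ x, HasDerivAt C' (C'' x) x)
    (hD : ∀ y, HasDerivAt D (D' y) y) (hD' : ∀ y, HasDerivAt D' (D'' y) y) (p : ℝ × ℝ) :
    lap (fun q : ℝ × ℝ => g (C q.1 + D q.2)) p =
      g'' (C p.1 + D p.2) * (C' p.1 ^ 2 + D' p.2 ^ 2) +
        g' (C p.1 + D p.2) * (C'' p.1 + D'' p.2) := by
  have hx : HasFDerivAt (fun q : ℝ × ℝ => g' (C q.1 + D q.2) * C' q.1) _ p :=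
    (hasFDerivAt_comp_fst_add_snd hg' hC hD p).mul ((hC' p.1).comp_hasFDerivAt p hasFDerivAt_fst)
  have hy : HasFDerivAt (fun q : ℝ × ℝ => g' (C q.1 + D q.2) * D' q.2) _ p :=
    (hasFDerivAt_comp_fst_add_snd hg' hC hD p).mul ((hD' p.2).comp_hasFDerivAt p hasFDerivAt_snd)
  rw [lap, pdx_comp_fst_add_snd hg hC hD, pdy_comp_fst_add_snd hg hC hD,
    pdx_eq_of_hasFDerivAt hx, pdy_eq_of_hasFDerivAt hy]
  simp only [smul_add, add_apply, smul_apply, coe_fst', coe_snd', smul_eq_mul, mul_one, mul_zero,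
    add_zero, zero_add]
  ring

end CompFstAddSnd

noncomputable def gd (w : ℝ) : ℝ := arctan (sinh w)

lemma hasDerivAt_gd (w : ℝ) : HasDerivAt gd (cosh w)⁻¹ w := by
  refine (hasDerivAt_sinh w).arctan.congr_deriv ?_
  rw [← cosh_sq']
  field_simp [(cosh_pos w).ne']

lemma hasDerivAt_inv_cosh (w : ℝ) :
    HasDerivAt (fun w => (cosh w)⁻¹) (-sinh w / cosh w ^ 2) w :=
  (hasDerivAt_cosh w).inv (cosh_pos w).ne'

lemma sin_two_mul_gd (w : ℝ) : sin (2 * gd w) = 2 * sinh w / cosh w ^ 2 := by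
  rw [gd, sin_two_mul, sin_arctan, cos_arctan, ← cosh_sq', sqrt_sq (cosh_pos w).le]
  ring

lemma two_mul_arctan_div_eq_gd {a b : ℝ} (ha : 0 < a) (hb : 0 < b) :
    2 * arctan ((a - b) / (a + b)) = gd (log a - log b) := by
  have hab : 0 < a + b := by positivity
  rw [two_mul_arctan, gd, ← log_div ha.ne' hb.ne', sinh_log (by positivity)]
  · have hden : 1 - ((a - b) / (a + b)) ^ 2 = 4 * a * b / (a + b) ^ 2 := by
      field_simp
      ring
    rw [inv_div, hden]
    congr 1
    field_simp
    ring
  · rw [lt_div_iff₀ hab]; linarith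
  · rw [div_lt_one hab]; linarith

lemma hasDerivAt_log_cosh_const_mul (k x : ℝ) :
    HasDerivAt (fun x => log (cosh (k * x))) (k * sinh (k * x) / cosh (k * x)) x :=
  ((hasDerivAt_cosh (k * x)).comp x (hasDerivAt_const_mul k)).log (cosh_pos _).ne'
    |>.congr_deriv (by simp only [Function.comp_apply]; ring)

lemma hasDerivAt_mul_sinh_div_cosh (k x : ℝ) :
    HasDerivAt (fun x => k * sinh (k * x) / cosh (k * x)) (k ^ 2 / cosh (k * x) ^ 2) x := by
  refine ((((hasDerivAt_sinh (k * x)).comp x (hasDerivAt_const_mul k)).const_mul k).div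
    ((hasDerivAt_cosh (k * x)).comp x (hasDerivAt_const_mul k)) (cosh_pos _).ne').congr_deriv ?_
  simp only [Function.comp_apply]
  field_simp
  linear_combination k ^ 2 * cosh_sq_sub_sinh_sq (k * x)

theorem lap_gd_log_cosh_sub (k : ℝ) (p : ℝ × ℝ) :
    lap (fun q : ℝ × ℝ => gd (log (cosh (k * q.1)) - log (cosh (k * q.2)))) p =
      -k ^ 2 * sin (2 * gd (log (cosh (k * p.1)) - log (cosh (k * p.2)))) := by
  have hlap := lap_comp_fst_add_snd hasDerivAt_gd hasDerivAt_inv_cosh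
    (hasDerivAt_log_cosh_const_mul k) (hasDerivAt_mul_sinh_div_cosh k)
    (D := fun y => -log (cosh (k * y))) (fun y => (hasDerivAt_log_cosh_const_mul k y).neg)
    (fun y => (hasDerivAt_mul_sinh_div_cosh k y).neg) p
  simp only [← sub_eq_add_neg] at hlap
  rw [hlap, sin_two_mul_gd]
  have ha : 0 < cosh (k * p.1) := cosh_pos _
  have hb : 0 < cosh (k * p.2) := cosh_pos _
  rw [← log_div ha.ne' hb.ne', cosh_log (by positivity), sinh_log (by positivity), inv_div]
  field_simp
  rw [sinh_sq, sinh_sq]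
  ring

theorem stmt_17 (θ : ℝ × ℝ → ℝ)
    (hθ : ∀ p : ℝ × ℝ, θ p = 2 * Real.arctan
      ((Real.cosh (Real.sqrt 2 * p.1) - Real.cosh (Real.sqrt 2 * p.2)) /
       (Real.cosh (Real.sqrt 2 * p.1) + Real.cosh (Real.sqrt 2 * p.2)))) :
    ∀ p : ℝ × ℝ, lap θ p = -2 * Real.sin (2 * θ p) := by
  have hθ_gd : θ = fun q => gd (log (cosh (√2 * q.1)) - log (cosh (√2 * q.2))) :=
    funext fun q => (hθ q).trans (two_mul_arctan_div_eq_gd (cosh_pos _) (cosh_pos _))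
  intro p
  rw [hθ_gd, lap_gd_log_cosh_sub, sq_sqrt zero_le_two]
end
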